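/- arXiv:math/0701838 — 7 statements merged into one kernel-verified Lean document; each statement's English description precedes it below -/
import Mathlib

section
/- Let A = (a_{i,j}) be an m×m matrix of integers. If (ℓ_j)_{j=1}^m and (λ_j)_{j=1}^m are both canons for A (i.e., for each of them, the matrix obtained by adding the integer to each entry of the corresponding row admits m column-maximal entries lying in pairwise distinct rows and pairwise distinct columns), then the componentwise minimum (min(ℓ_j, λ_j))_{j=1}^m is also a canon for A. -/
/-- `lam` is a canon for the `m × m` integer matrix `A`: adding `lam i` to each entry of
row `i`, the resulting matrix possesses `m` transversal maxima, i.e. there is a permutation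
`σ` such that for each `i` the entry at `(i, σ i)` is maximal in its column. -/
def IsCanon {m : ℕ} (A : Matrix (Fin m) (Fin m) ℤ) (lam : Fin m → ℕ) : Prop :=
  ∃ σ : Equiv.Perm (Fin m), ∀ i k : Fin m,
    A k (σ i) + (lam k : ℤ) ≤ A i (σ i) + (lam i : ℤ)

/-- The componentwise minimum of two canons is a canon. -/
theorem min_of_two_canons_is_canon {m : ℕ} (A : Matrix (Fin m) (Fin m) ℤ)
    (l lam : Fin m → ℕ) (hl : IsCanon A l) (hlam : IsCanon A lam) :
    IsCanon A (fun j => min (l j) (lam j)) := by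
  obtain ⟨σ, hσ⟩ := hl
  obtain ⟨τ, hτ⟩ := hlam
  set f : Fin m → Fin m := fun i => if lam i < l i then τ i else σ i with hf
  have hinj : Function.Injective f := by
    intro i k h
    simp only [hf] at h
    by_cases hi : lam i < l i <;> by_cases hk : lam k < l k <;>
      simp only [hi, hk, if_pos, if_neg, if_true, if_false] at h
    · exact τ.injective h
    · exfalso
      have h1 := hτ i k
      have h2 := hσ k i
      rw [h] at h1
      omega
    · exfalso
      have h1 := hτ k i
      have h2 := hσ i k
      rw [h] at h2
      omega
    · exact σ.injective h
  refine ⟨Equiv.ofBijective f (Finite.injective_iff_bijective.mp hinj), ?_⟩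
  intro i k
  simp only [Equiv.ofBijective_apply, hf]
  have hmk1 : ((min (l k) (lam k) : ℕ) : ℤ) ≤ (l k : ℤ) := by
    exact_mod_cast Nat.cast_le.mpr (min_le_left _ _)
  have hmk2 : ((min (l k) (lam k) : ℕ) : ℤ) ≤ (lam k : ℤ) := by
    exact_mod_cast Nat.cast_le.mpr (min_le_right _ _)
  by_cases hi : lam i < l i
  · have hmi : ((min (l i) (lam i) : ℕ) : ℤ) = (lam i : ℤ) := by
      have : min (l i) (lam i) = lam i := min_eq_right (le_of_lt hi)
      exact_mod_cast congrArg (Nat.cast : ℕ → ℤ) this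
    simp only [if_pos hi]
    have h1 := hτ i k
    omega
  · have hmi : ((min (l i) (lam i) : ℕ) : ℤ) = (l i : ℤ) := by
      have : min (l i) (lam i) = l i := min_eq_left (by omega)
      exact_mod_cast congrArg (Nat.cast : ℕ → ℤ) this
    simp only [if_neg hi]
    have h1 := hσ i k
    omega
end

section
/- Every m×m integer matrix A admits a unique minimal canon: there exists a canon (λ*_i) such that for every canon (λ_i) of A, λ*_i ≤ λ_i for all i. -/
open Finset
namespace CanonAux
open scoped Classical
variable {m : ℕ} [NeZero m]
noncomputable def colMax (A : Matrix (Fin m) (Fin m) ℤ) (lam : Fin m → ℕ) (j : Fin m) : ℤ :=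
  Finset.univ.sup' Finset.univ_nonempty (fun k => A k j + (lam k : ℤ))
lemma le_colMax (A : Matrix (Fin m) (Fin m) ℤ) (lam : Fin m → ℕ) (k j : Fin m) :
    A k j + (lam k : ℤ) ≤ colMax A lam j := by
  unfold colMax; exact Finset.le_sup' (fun k => A k j + (lam k : ℤ)) (mem_univ k)
lemma colMax_le (A : Matrix (Fin m) (Fin m) ℤ) (lam : Fin m → ℕ) (j : Fin m) {c : ℤ}
    (h : ∀ k, A k j + (lam k : ℤ) ≤ c) : colMax A lam j ≤ c := by
  unfold colMax; exact Finset.sup'_le _ _ fun k _ => h k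
lemma exists_colMax (A : Matrix (Fin m) (Fin m) ℤ) (lam : Fin m → ℕ) (j : Fin m) :
    ∃ k, colMax A lam j = A k j + (lam k : ℤ) := by
  obtain ⟨k, -, hk⟩ := Finset.exists_mem_eq_sup' (univ_nonempty)
    (fun k => A k j + (lam k : ℤ))
  exact ⟨k, hk⟩
lemma canon_of_tight (A : Matrix (Fin m) (Fin m) ℤ) (lam : Fin m → ℕ)
    (π : Equiv.Perm (Fin m)) (h : ∀ i, A i (π i) + (lam i : ℤ) = colMax A lam (π i)) :
    IsCanon A lam :=
  ⟨π, fun i k => (le_colMax A lam k (π i)).trans (h i).ge⟩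
noncomputable def Phi (A : Matrix (Fin m) (Fin m) ℤ) (lam : Fin m → ℕ) : ℤ :=
  (∑ j, colMax A lam j) - ∑ i, (lam i : ℤ)
lemma phi_lower (A : Matrix (Fin m) (Fin m) ℤ) (lam : Fin m → ℕ) :
    (∑ i, A i i) ≤ Phi A lam := by
  have h : ∑ i, (A i i + (lam i : ℤ)) ≤ ∑ i, colMax A lam i :=
    Finset.sum_le_sum fun i _ => le_colMax A lam i i
  rw [Finset.sum_add_distrib] at h
  unfold Phi; omega

/-- the set of columns tight for row `i` -/
noncomputable def tightCols (A : Matrix (Fin m) (Fin m) ℤ) (lam : Fin m → ℕ)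
    (i : Fin m) : Finset (Fin m) :=
  univ.filter (fun j => A i j + (lam i : ℤ) = colMax A lam j)

/-- Hungarian descent step: if the tight graph violates Hall's condition on `S`,
we can strictly decrease `Phi`. -/
lemma descent (A : Matrix (Fin m) (Fin m) ℤ) (lam : Fin m → ℕ) (S : Finset (Fin m))
    (hS : #(S.biUnion (tightCols A lam)) < #S) :
    ∃ lam' : Fin m → ℕ, Phi A lam' < Phi A lam := by
  set N := S.biUnion (tightCols A lam) with hN
  -- membership facts about N
  have hmemN : ∀ j, j ∈ N ↔ ∃ i ∈ S, A i j + (lam i : ℤ) = colMax A lam j := by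
    intro j
    rw [hN, Finset.mem_biUnion]
    constructor
    · rintro ⟨i, hi, hij⟩
      simp only [tightCols, Finset.mem_filter] at hij
      exact ⟨i, hi, hij.2⟩
    · rintro ⟨i, hi, hij⟩
      exact ⟨i, hi, by simp [tightCols, hij]⟩
  set lam' : Fin m → ℕ := fun i => lam i + if i ∈ S then 1 else 0 with hlam'
  have hcast : ∀ i, (lam' i : ℤ) = lam i + if i ∈ S then 1 else 0 := by
    intro i
    by_cases h : i ∈ S <;> simp [hlam', h]
  -- column maxima of lam'
  have hcol : ∀ j, colMax A lam' j = colMax A lam j + if j ∈ N then 1 else 0 := by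
    intro j
    by_cases hj : j ∈ N
    · simp only [hj, if_true]
      apply le_antisymm
      · apply colMax_le
        intro k
        rw [hcast k]
        by_cases hk : k ∈ S
        · simp only [hk, if_true]
          have := le_colMax A lam k j
          omega
        · simp only [hk, if_false]
          have := le_colMax A lam k j
          omega
      · obtain ⟨i, hi, hti⟩ := (hmemN j).mp hj
        calc colMax A lam j + 1 = A i j + (lam' i : ℤ) := by
              rw [hcast i]; simp only [hi, if_true]; omega
          _ ≤ colMax A lam' j := le_colMax A lam' i j
    · rw [if_neg hj, add_zero]
      apply le_antisymm
      · apply colMax_le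
        intro k
        rw [hcast k]
        by_cases hk : k ∈ S
        · simp only [hk, if_true]
          -- (k, j) is not tight, so there is slack at least 1
          have hne : A k j + (lam k : ℤ) ≠ colMax A lam j := fun h =>
            hj ((hmemN j).mpr ⟨k, hk, h⟩)
          have := le_colMax A lam k j
          omega
        · simp only [hk, if_false]
          have := le_colMax A lam k j
          omega
      · apply colMax_le
        intro k
        have := le_colMax A lam' k j
        rw [hcast k] at this
        by_cases hk : k ∈ S
        · simp only [hk, if_true] at this; omega
        · simp only [hk, if_false] at this; omega
  refine ⟨lam', ?_⟩
  unfold Phi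
  have h1 : ∑ j, colMax A lam' j = (∑ j, colMax A lam j) + #N * 1 := by
    simp only [hcol]
    rw [Finset.sum_add_distrib, Finset.sum_ite_mem, univ_inter, Finset.sum_const,
      nsmul_eq_mul]
  have h2 : ∑ i, (lam' i : ℤ) = (∑ i, (lam i : ℤ)) + #S * 1 := by
    simp only [hcast]
    rw [Finset.sum_add_distrib, Finset.sum_ite_mem, univ_inter, Finset.sum_const,
      nsmul_eq_mul]
  rw [h1, h2]
  have hNS : (#N : ℤ) < (#S : ℤ) := by exact_mod_cast hS
  omega

-- continuing: existence
lemma exists_canon_aux (A : Matrix (Fin m) (Fin m) ℤ) :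
    ∀ n : ℕ, ∀ lam : Fin m → ℕ, (Phi A lam - ∑ i, A i i).toNat < n → IsCanon A lam ∨
      ∃ lam', Phi A lam' < Phi A lam := by
  intro n lam _
  by_cases h : ∀ s : Finset (Fin m), #s ≤ #(s.biUnion (tightCols A lam))
  · left
    obtain ⟨f, hinj, hf⟩ := (Finset.all_card_le_biUnion_card_iff_exists_injective
      (tightCols A lam)).mp h
    have hbij : Function.Bijective f := Finite.injective_iff_bijective.mp hinj
    let π := Equiv.ofBijective f hbij
    apply canon_of_tight A lam π
    intro i
    have := hf i
    simp only [tightCols, Finset.mem_filter] at this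
    exact this.2
  · right
    push_neg at h
    obtain ⟨S, hS⟩ := h
    exact descent A lam S hS

lemma exists_canon (A : Matrix (Fin m) (Fin m) ℤ) : ∃ lam, IsCanon A lam := by
  suffices h : ∀ n : ℕ, ∀ lam : Fin m → ℕ, (Phi A lam - ∑ i, A i i).toNat < n →
      ∃ lam', IsCanon A lam' by
    exact h ((Phi A (fun _ => 0) - ∑ i, A i i).toNat + 1) (fun _ => 0) (by omega)
  intro n
  induction n with
  | zero => intro lam h; omega
  | succ n ih =>
    intro lam h
    rcases exists_canon_aux A (n+1) lam h with hc | ⟨lam', hlt⟩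
    · exact ⟨lam, hc⟩
    · apply ih lam'
      have hlb := phi_lower A lam'
      have hlb2 := phi_lower A lam
      omega
noncomputable def permMax (A : Matrix (Fin m) (Fin m) ℤ) : ℤ :=
  Finset.univ.sup' Finset.univ_nonempty (fun π : Equiv.Perm (Fin m) => ∑ i, A i (π i))

lemma weak_duality (A : Matrix (Fin m) (Fin m) ℤ) (lam v : Fin m → ℤ)
    (hfeas : ∀ i j, A i j + lam i ≤ v j) :
    permMax A ≤ (∑ j, v j) - ∑ i, lam i := by
  unfold permMax
  apply Finset.sup'_le
  intro π _
  have h : ∑ i, (A i (π i) + lam i) ≤ ∑ i, v (π i) :=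
    Finset.sum_le_sum fun i _ => hfeas i (π i)
  rw [Finset.sum_add_distrib] at h
  have h2 : ∑ i, v (π i) = ∑ j, v j := Equiv.sum_comp π v
  omega

lemma canon_phi (A : Matrix (Fin m) (Fin m) ℤ) (lam : Fin m → ℕ) (h : IsCanon A lam) :
    Phi A lam ≤ permMax A := by
  obtain ⟨σ, hσ⟩ := h
  have hcol : ∀ i, colMax A lam (σ i) = A i (σ i) + (lam i : ℤ) := fun i =>
    le_antisymm (colMax_le _ _ _ (fun k => hσ i k)) (le_colMax A lam i (σ i))
  have h1 : ∑ i, colMax A lam (σ i) = ∑ j, colMax A lam j := Equiv.sum_comp σ _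
  have h2 : ∑ i, colMax A lam (σ i) = ∑ i, (A i (σ i) + (lam i : ℤ)) :=
    Finset.sum_congr rfl (fun i _ => hcol i)
  rw [Finset.sum_add_distrib] at h2
  have h3 : ∑ i, A i (σ i) ≤ permMax A := by
    unfold permMax
    exact Finset.le_sup' (fun π : Equiv.Perm (Fin m) => ∑ i, A i (π i)) (mem_univ σ)
  unfold Phi
  omega

lemma canon_of_phi_le (A : Matrix (Fin m) (Fin m) ℤ) (lam : Fin m → ℕ)
    (h : Phi A lam ≤ permMax A) : IsCanon A lam := by
  obtain ⟨σ, -, hσ⟩ := Finset.exists_mem_eq_sup' (univ_nonempty)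
    (fun π : Equiv.Perm (Fin m) => ∑ i, A i (π i))
  apply canon_of_tight A lam σ
  by_contra hc
  push_neg at hc
  obtain ⟨i0, hi0⟩ := hc
  have hstrict : A i0 (σ i0) + (lam i0 : ℤ) < colMax A lam (σ i0) :=
    lt_of_le_of_ne (le_colMax A lam i0 (σ i0)) hi0
  have hsum : ∑ i, (A i (σ i) + (lam i : ℤ)) < ∑ i, colMax A lam (σ i) :=
    Finset.sum_lt_sum (fun i _ => le_colMax A lam i (σ i)) ⟨i0, mem_univ _, hstrict⟩
  rw [Finset.sum_add_distrib] at hsum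
  have h1 : ∑ i, colMax A lam (σ i) = ∑ j, colMax A lam j := Equiv.sum_comp σ _
  have h2 : permMax A = ∑ i, A i (σ i) := by unfold permMax; exact hσ
  unfold Phi at h
  omega

/-- the componentwise minimum of two canons is a canon -/
lemma min_canon (A : Matrix (Fin m) (Fin m) ℤ) {lam mu : Fin m → ℕ}
    (hl : IsCanon A lam) (hm : IsCanon A mu) :
    IsCanon A (fun i => min (lam i) (mu i)) := by
  set nu : Fin m → ℕ := fun i => min (lam i) (mu i) with hnu
  apply canon_of_phi_le
  have hnucol : ∀ j, colMax A nu j ≤ min (colMax A lam j) (colMax A mu j) := by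
    intro j
    apply le_min
    · apply colMax_le
      intro k
      have h1 := le_colMax A lam k j
      have h2 : (nu k : ℤ) ≤ (lam k : ℤ) := by
        simp only [hnu]; exact_mod_cast Nat.min_le_left _ _
      omega
    · apply colMax_le
      intro k
      have h1 := le_colMax A mu k j
      have h2 : (nu k : ℤ) ≤ (mu k : ℤ) := by
        simp only [hnu]; exact_mod_cast Nat.min_le_right _ _
      omega
  have hVfeas : ∀ i j, A i j + ((max (lam i) (mu i) : ℕ) : ℤ) ≤
      max (colMax A lam j) (colMax A mu j) := by
    intro i j
    rcases le_total (lam i) (mu i) with hle | hle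
    · have h : ((max (lam i) (mu i) : ℕ) : ℤ) = (mu i : ℤ) := by
        rw [sup_eq_right.mpr hle]
      rw [h]
      exact le_trans (le_colMax A mu i j) (le_max_right _ _)
    · have h : ((max (lam i) (mu i) : ℕ) : ℤ) = (lam i : ℤ) := by
        rw [sup_eq_left.mpr hle]
      rw [h]
      exact le_trans (le_colMax A lam i j) (le_max_left _ _)
  have hwd : permMax A ≤ (∑ j, max (colMax A lam j) (colMax A mu j)) -
      ∑ i, ((max (lam i) (mu i) : ℕ) : ℤ) :=
    weak_duality A (fun i => ((max (lam i) (mu i) : ℕ) : ℤ))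
      (fun j => max (colMax A lam j) (colMax A mu j)) hVfeas
  have hl' := canon_phi A lam hl
  have hm' := canon_phi A mu hm
  -- sum identities
  have hminmax1 : (∑ j, min (colMax A lam j) (colMax A mu j)) +
      (∑ j, max (colMax A lam j) (colMax A mu j)) =
      (∑ j, colMax A lam j) + (∑ j, colMax A mu j) := by
    rw [← Finset.sum_add_distrib, ← Finset.sum_add_distrib]
    exact Finset.sum_congr rfl (fun j _ => min_add_max _ _)
  have hminmax2 : (∑ i, (nu i : ℤ)) + (∑ i, ((max (lam i) (mu i) : ℕ) : ℤ)) =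
      (∑ i, (lam i : ℤ)) + (∑ i, (mu i : ℤ)) := by
    rw [← Finset.sum_add_distrib, ← Finset.sum_add_distrib]
    refine Finset.sum_congr rfl (fun i _ => ?_)
    simp only [hnu]
    push_cast
    rw [min_add_max]
  have hsumle : ∑ j, colMax A nu j ≤ ∑ j, min (colMax A lam j) (colMax A mu j) :=
    Finset.sum_le_sum fun j _ => hnucol j
  unfold Phi at hl' hm' ⊢
  omega
end CanonAux

/-- Every square integer matrix admits a unique minimal canon: a canon that is
componentwise less than or equal to every canon. -/
theorem exists_unique_minimal_canon {m : ℕ} (A : Matrix (Fin m) (Fin m) ℤ) :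
    ∃! lamStar : Fin m → ℕ, IsCanon A lamStar ∧
      ∀ lam : Fin m → ℕ, IsCanon A lam → ∀ i, lamStar i ≤ lam i := by
  classical
  rcases Nat.eq_zero_or_pos m with hm | hm
  · subst hm
    refine ⟨fun _ => 0, ⟨⟨1, fun i => i.elim0⟩, fun lam _ i => i.elim0⟩, ?_⟩
    intro y _
    funext i
    exact i.elim0
  · haveI : NeZero m := ⟨hm.ne'⟩
    have hex : ∃ n : ℕ, ∃ lam : Fin m → ℕ, IsCanon A lam ∧ ∑ i, lam i = n := by
      obtain ⟨lam, h⟩ := CanonAux.exists_canon A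
      exact ⟨∑ i, lam i, lam, h, rfl⟩
    obtain ⟨lamS, hcan, hsum⟩ := Nat.find_spec hex
    have hmin : ∀ lam : Fin m → ℕ, IsCanon A lam → ∀ i, lamS i ≤ lam i := by
      intro lam hlam i
      have hnu := CanonAux.min_canon A hcan hlam
      have h1 : Nat.find hex ≤ ∑ i, min (lamS i) (lam i) :=
        Nat.find_le ⟨fun i => min (lamS i) (lam i), hnu, rfl⟩
      have h2 : ∑ i, min (lamS i) (lam i) ≤ ∑ i, lamS i :=
        Finset.sum_le_sum (fun i _ => min_le_left _ _)
      have heq : ∑ i, min (lamS i) (lam i) = ∑ i, lamS i :=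
        le_antisymm h2 (hsum ▸ h1)
      have hterm := (Finset.sum_eq_sum_iff_of_le
        (fun i _ => min_le_left (lamS i) (lam i))).mp heq i (Finset.mem_univ i)
      calc lamS i = min (lamS i) (lam i) := hterm.symm
        _ ≤ lam i := min_le_right _ _
    refine ⟨lamS, ⟨hcan, hmin⟩, ?_⟩
    intro y ⟨hycan, hymin⟩
    funext i
    exact Nat.le_antisymm (hymin lamS hcan i) (hmin y hycan i)
end

section
/- Every m×m integer matrix admits at least one canon. In particular, taking λ_i = Λ − (row adjustment from an optimal assignment), one can always find nonnegative integers λ_1,…,λ_m such that (a_{i,j}+λ_i) has m transversal column-maxima. -/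
lemma List.map_formPerm_eq_rotate_one {α : Type*} [DecidableEq α] {l : List α} (hl : l.Nodup) :
    l.map l.formPerm = l.rotate 1 :=
  List.ext_getElem (by simp) fun j _ _ => by
    rw [List.getElem_map, List.formPerm_apply_getElem _ hl, List.getElem_rotate]

section PathWeight

variable {α β : Type*} [AddCommMonoid β] (c : α → α → β)

def pathWeight (l : List α) : β :=
  (List.zipWith c l l.tail).sum

@[simp]
lemma pathWeight_singleton (a : α) : pathWeight c [a] = 0 := rfl

@[simp]
lemma pathWeight_cons_cons (a b : α) (l : List α) :
    pathWeight c (a :: b :: l) = c a b + pathWeight c (b :: l) := by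
  simp [pathWeight]

lemma pathWeight_append_cons (l₁ : List α) (x : α) (l₂ : List α) :
    pathWeight c (l₁ ++ x :: l₂) = pathWeight c (l₁ ++ [x]) + pathWeight c (x :: l₂) := by
  induction l₁ with
  | nil => simp
  | cons a l₁ ih => cases l₁ <;> simp_all [add_assoc]

lemma pathWeight_cycle_eq_sum_formPerm [DecidableEq α] {x : α} {l : List α}
    (hl : (x :: l).Nodup) :
    pathWeight c (x :: l ++ [x]) = ((x :: l).map fun y => c y ((x :: l).formPerm y)).sum := by
  have hzip : List.zipWith c (x :: l ++ [x]) (l ++ [x]) = List.zipWith c (x :: l) (l ++ [x]) := by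
    simpa using List.zipWith_append (f := c) (l₁' := [x]) (l₂' := [])
      (by simp : (x :: l).length = (l ++ [x]).length)
  have hrot : (x :: l).rotate 1 = l ++ [x] := by simp
  rw [pathWeight, List.cons_append, List.tail_cons, ← List.cons_append, hzip, ← hrot,
    ← List.map_formPerm_eq_rotate_one hl, List.zipWith_map_right, List.zipWith_self]

section LinearOrder

variable [LinearOrder β]

def NoPositiveCycle : Prop :=
  ∀ x l, (x :: l).Nodup → pathWeight c (x :: l ++ [x]) ≤ 0

-- The maximum runs over the walks `x :: l` with `l` nodup, which may revisit `x`; without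
-- positive cycles none of them beats the simple paths from `x` (`exists_nodup_cons_pathWeight_le`).
def longestPathWeight [Fintype α] (x : α) : β :=
  Finset.univ.sup' ⟨⟨[], List.nodup_nil⟩, Finset.mem_univ _⟩
    fun l : {l : List α // l.Nodup} => pathWeight c (x :: l.1)

lemma pathWeight_le_longestPathWeight [Fintype α] (x : α) {l : List α} (hl : l.Nodup) :
    pathWeight c (x :: l) ≤ longestPathWeight c x :=
  Finset.le_sup' (fun l : {l : List α // l.Nodup} => pathWeight c (x :: l.1))
    (Finset.mem_univ ⟨l, hl⟩)

lemma longestPathWeight_nonneg [Fintype α] (x : α) : 0 ≤ longestPathWeight c x :=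
  pathWeight_le_longestPathWeight c x List.nodup_nil

variable [IsOrderedAddMonoid β]

lemma exists_nodup_cons_pathWeight_le (hc : NoPositiveCycle c) (x : α) {l : List α}
    (hl : l.Nodup) :
    ∃ l', (x :: l').Nodup ∧ pathWeight c (x :: l) ≤ pathWeight c (x :: l') := by
  by_cases hx : x ∈ l
  · obtain ⟨l₁, l₂, rfl⟩ := List.append_of_mem hx
    have hcycle : pathWeight c (x :: l₁ ++ [x]) ≤ 0 :=
      hc x l₁ <| (List.nodup_middle.mp hl).sublist <|
        (List.sublist_append_left l₁ l₂).cons_cons x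
    refine ⟨l₂, hl.sublist (List.sublist_append_right l₁ (x :: l₂)), ?_⟩
    calc pathWeight c (x :: (l₁ ++ x :: l₂))
        = pathWeight c (x :: l₁ ++ [x]) + pathWeight c (x :: l₂) :=
          pathWeight_append_cons c (x :: l₁) x l₂
      _ ≤ pathWeight c (x :: l₂) := add_le_of_nonpos_left hcycle
  · exact ⟨l, List.nodup_cons.mpr ⟨hx, hl⟩, le_rfl⟩

lemma add_longestPathWeight_le [Fintype α] (hc : NoPositiveCycle c) (x y : α) :
    c x y + longestPathWeight c y ≤ longestPathWeight c x := by
  obtain ⟨⟨l, hl⟩, -, hmax⟩ :=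
    Finset.exists_mem_eq_sup' ⟨⟨[], List.nodup_nil⟩, Finset.mem_univ _⟩
      fun l : {l : List α // l.Nodup} => pathWeight c (y :: l.1)
  obtain ⟨l', hl', hle⟩ := exists_nodup_cons_pathWeight_le c hc y hl
  calc c x y + longestPathWeight c y
      ≤ c x y + pathWeight c (y :: l') := by
        rw [longestPathWeight, hmax]
        gcongr
    _ = pathWeight c (x :: y :: l') := (pathWeight_cons_cons c x y l').symm
    _ ≤ longestPathWeight c x := pathWeight_le_longestPathWeight c x hl'

end LinearOrder

end PathWeight

section Assignment

variable {n β : Type*} [Fintype n] [DecidableEq n] [AddCommGroup β] [LinearOrder β]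
  [IsOrderedAddMonoid β] (A : Matrix n n β) (σ : Equiv.Perm n)

def reducedCost (i k : n) : β :=
  A k (σ i) - A i (σ i)

lemma noPositiveCycle_reducedCost
    (hσ : ∀ τ : Equiv.Perm n, ∑ i, A i (τ i) ≤ ∑ i, A i (σ i)) :
    NoPositiveCycle (reducedCost A σ) := by
  intro x l hl
  set π := (x :: l).formPerm
  have hsum :
      pathWeight (reducedCost A σ) (x :: l ++ [x]) = ∑ y, (A (π y) (σ y) - A y (σ y)) := by
    rw [pathWeight_cycle_eq_sum_formPerm _ hl, ← List.sum_toFinset _ hl]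
    refine Finset.sum_subset (Finset.subset_univ _) fun y _ hy => ?_
    rw [List.formPerm_apply_of_notMem (by simpa using hy)]
    exact sub_self _
  have hperm : ∑ y, A (π y) (σ y) = ∑ y, A y ((π.symm.trans σ) y) := by
    simpa using Equiv.sum_comp π fun y => A y (σ (π.symm y))
  rw [hsum, Finset.sum_sub_distrib, hperm, sub_nonpos]
  exact hσ _

end Assignment

/-- Every square integer matrix admits at least one canon. -/
theorem exists_canon {m : ℕ} (A : Matrix (Fin m) (Fin m) ℤ) :
    ∃ lam : Fin m → ℕ, IsCanon A lam := by
  obtain ⟨σ, -, hσ⟩ := Finset.exists_max_image Finset.univ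
    (fun τ : Equiv.Perm (Fin m) => ∑ i, A i (τ i)) Finset.univ_nonempty
  have hcycle := noPositiveCycle_reducedCost A σ fun τ => hσ τ (Finset.mem_univ τ)
  refine ⟨fun i => (longestPathWeight (reducedCost A σ) i).toNat, σ, fun i k => ?_⟩
  have hpot := add_longestPathWeight_le (reducedCost A σ) hcycle i k
  simp only [Int.toNat_of_nonneg (longestPathWeight_nonneg _ _), reducedCost] at hpot ⊢
  linarith
end

section
/- Let A = (a_{i,j}) be an m×m integer matrix and (λ_i) a canon for A with associated system of transversal maxima given by a permutation σ. Then σ achieves the maximum of ∑_{i=1}^m a_{i,τ(i)} over all permutations τ of {1,…,m}; that is, J := max_{τ ∈ S_m} ∑_i a_{i,τ(i)} = ∑_i a_{i,σ(i)}. -/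
/-- If `lam` is a canon for `A` with transversal maxima along the permutation `σ`,
then `σ` maximizes `∑ i, A i (τ i)` over all permutations `τ`; in particular Jacobi's
number `J = max_{τ} ∑ i, A i (τ i)` equals `∑ i, A i (σ i)`. -/
theorem canon_transversal_achieves_jacobi_number {m : ℕ}
    (A : Matrix (Fin m) (Fin m) ℤ) (lam : Fin m → ℕ) (σ : Equiv.Perm (Fin m))
    (hcanon : ∀ i k : Fin m, A k (σ i) + (lam k : ℤ) ≤ A i (σ i) + (lam i : ℤ)) :
    (∀ τ : Equiv.Perm (Fin m), ∑ i, A i (τ i) ≤ ∑ i, A i (σ i)) ∧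
    Finset.univ.sup' ⟨σ, Finset.mem_univ σ⟩
        (fun τ : Equiv.Perm (Fin m) => ∑ i, A i (τ i)) = ∑ i, A i (σ i) := by
  have hmax : ∀ τ : Equiv.Perm (Fin m), ∑ i, A i (τ i) ≤ ∑ i, A i (σ i) := by
    intro τ
    have h1 : ∑ i, (A i (τ i) + (lam i : ℤ)) ≤
        ∑ i, (A (σ.symm (τ i)) (τ i) + (lam (σ.symm (τ i)) : ℤ)) := by
      apply Finset.sum_le_sum
      intro i _
      have := hcanon (σ.symm (τ i)) i
      simpa using this
    have h2 : ∑ i, (A (σ.symm (τ i)) (τ i) + (lam (σ.symm (τ i)) : ℤ)) =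
        ∑ k, (A k (σ k) + (lam k : ℤ)) := by
      have := Equiv.sum_comp (τ.trans σ.symm)
        (fun k => A k (σ k) + (lam k : ℤ))
      simpa using this
    have h3 := h1.trans_eq h2
    rw [Finset.sum_add_distrib, Finset.sum_add_distrib] at h3
    linarith
  refine ⟨hmax, le_antisymm ?_ ?_⟩
  · apply Finset.sup'_le
    intro τ _
    exact hmax τ
  · exact Finset.le_sup' (fun τ : Equiv.Perm (Fin m) => ∑ i, A i (τ i)) (Finset.mem_univ σ)
end

section
/- With the notation of the canon construction (α_i = Λ − λ_i, β_j = max_i(a_{i,j} − α_i) for a canon (λ_i) of an m×m matrix), the Jacobi number satisfies J = max_{σ∈S_m} ∑_i a_{i,σ(i)} = ∑_{i=1}^m α_i + ∑_{j=1}^m β_j. -/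
/-- Strong duality from a canon: with `Λ = max_i lam i`, `α i = Λ - lam i`,
`β j = max_i (A i j - α i)`, Jacobi's number `J = max_{σ} ∑ i, A i (σ i)` equals
`∑ i, α i + ∑ j, β j`. -/
theorem jacobi_number_eq_cover_sum {m : ℕ} (hm : 0 < m)
    (A : Matrix (Fin m) (Fin m) ℤ) (lam : Fin m → ℕ) (σ : Equiv.Perm (Fin m))
    (hcanon : ∀ i k : Fin m, A k (σ i) + (lam k : ℤ) ≤ A i (σ i) + (lam i : ℤ)) :
    let Λ : ℕ := Finset.univ.sup lam
    let α : Fin m → ℕ := fun i => Λ - lam i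
    let β : Fin m → ℤ := fun j =>
      Finset.univ.sup' ⟨⟨0, hm⟩, Finset.mem_univ _⟩ (fun i => A i j - (α i : ℤ))
    Finset.univ.sup' ⟨1, Finset.mem_univ 1⟩
        (fun τ : Equiv.Perm (Fin m) => ∑ i, A i (τ i)) =
      (∑ i, (α i : ℤ)) + ∑ j, β j := by
  intro Λ α β
  have hΛ : ∀ i, lam i ≤ Λ := fun i => Finset.le_sup (Finset.mem_univ i)
  have hα : ∀ i, (α i : ℤ) = (Λ : ℤ) - lam i := fun i => by
    simp only [α]; rw [Nat.cast_sub (hΛ i)]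
  have hβσ : ∀ i, β (σ i) = A i (σ i) - α i := by
    intro i
    apply le_antisymm
    · apply Finset.sup'_le
      intro k _
      have h := hcanon i k
      rw [hα k, hα i]
      omega
    · exact Finset.le_sup' (fun k => A k (σ i) - (α k : ℤ)) (Finset.mem_univ i)
  have hsum : (∑ i, (α i : ℤ)) + ∑ j, β j = ∑ i, A i (σ i) := by
    rw [← Equiv.sum_comp σ β, ← Finset.sum_add_distrib]
    refine Finset.sum_congr rfl fun i _ => ?_
    rw [hβσ i]; ring
  rw [hsum]
  apply le_antisymm
  · apply Finset.sup'_le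
    intro τ _
    calc ∑ i, A i (τ i) ≤ ∑ i, ((α i : ℤ) + β (τ i)) := by
          refine Finset.sum_le_sum fun i _ => ?_
          have h : A i (τ i) - α i ≤ β (τ i) := Finset.le_sup' (fun k => A k (τ i) - (α k : ℤ)) (Finset.mem_univ i)
          omega
      _ = (∑ i, (α i : ℤ)) + ∑ i, β (τ i) := Finset.sum_add_distrib
      _ = (∑ i, (α i : ℤ)) + ∑ j, β j := by rw [Equiv.sum_comp τ β]
      _ = ∑ i, A i (σ i) := hsum
  · exact Finset.le_sup' (fun τ : Equiv.Perm (Fin m) => ∑ i, A i (τ i)) (Finset.mem_univ σ)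
end

section
/- Let (a_{i,j}) be an m×m integer matrix, (λ_i) a canon with transversal maxima along permutation σ, and suppose row k of the matrix (∂-pattern) is modified to a new row (a*_{k,j}) satisfying a*_{k,j} < α_k + β_j for all j (where α_i = Λ − λ_i, β_j = max_i(a_{i,j} − α_i)). Then the Jacobi number of the modified matrix A* is strictly less than the Jacobi number of A, provided the canon's transversal maxima include position (k, σ(k)) with a_{k,σ(k)} = α_k + β_{σ(k)}. -/
/-!
Every permutation `τ` picks one entry from each row and each column, so for a cover
`A i j ≤ α i + β j` its value `∑ i, A i (τ i)` is at most `∑ α + ∑ β`, and strictly less as soon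
as the entries of one row lie strictly below the cover. The canon condition says that along `σ`
each entry maximises `A i' (σ i) - α i'` in its column, so the cover is attained along `σ` and
`J(A) = ∑ α + ∑ β`, while the modified matrix stays below it with a strict row.
-/

open Finset

namespace Matrix

variable {n R : Type*} [Fintype n]

theorem sum_add_comp_perm [AddCommMonoid R] (α β : n → R) (τ : Equiv.Perm n) :
    ∑ i, (α i + β (τ i)) = ∑ i, α i + ∑ j, β j := by
  rw [sum_add_distrib, Equiv.sum_comp τ β]

variable [DecidableEq n]

def jacobiNumber [LinearOrder R] [AddCommMonoid R] (A : Matrix n n R) : R :=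
  univ.sup' univ_nonempty fun τ : Equiv.Perm n => ∑ i, A i (τ i)

section Cover

variable [AddCommMonoid R] [LinearOrder R] [IsOrderedCancelAddMonoid R]

theorem sum_add_le_jacobiNumber {A : Matrix n n R} {α β : n → R} (σ : Equiv.Perm n)
    (hσ : ∀ i, α i + β (σ i) ≤ A i (σ i)) :
    ∑ i, α i + ∑ j, β j ≤ A.jacobiNumber :=
  calc ∑ i, α i + ∑ j, β j = ∑ i, (α i + β (σ i)) := (sum_add_comp_perm α β σ).symm
    _ ≤ ∑ i, A i (σ i) := sum_le_sum fun i _ => hσ i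
    _ ≤ A.jacobiNumber := le_sup' (fun τ : Equiv.Perm n => ∑ i, A i (τ i)) (mem_univ σ)

theorem jacobiNumber_lt_of_row_lt {A : Matrix n n R} {α β : n → R} (k : n)
    (hle : ∀ i ≠ k, ∀ j, A i j ≤ α i + β j) (hlt : ∀ j, A k j < α k + β j) :
    A.jacobiNumber < ∑ i, α i + ∑ j, β j := by
  refine (sup'_lt_iff _).2 fun τ _ => ?_
  calc ∑ i, A i (τ i) < ∑ i, (α i + β (τ i)) := by
        refine sum_lt_sum (fun i _ => ?_) ⟨k, mem_univ k, hlt (τ k)⟩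
        rcases eq_or_ne i k with rfl | hik
        exacts [(hlt (τ i)).le, hle i hik (τ i)]
    _ = ∑ i, α i + ∑ j, β j := sum_add_comp_perm α β τ

end Cover

end Matrix

open Matrix

/-- If `lam` is a canon for `A` with transversal maxima along `σ` (with cover
`α i = Λ - lam i`, `β j = max_i (A i j - α i)`, tight at `(k, σ k)`), and the matrix `A*`
agrees with `A` except on row `k`, where all its entries satisfy the strict inequality
`A* k j < α k + β j`, then the Jacobi number of `A*` is strictly less than that of `A`. -/
theorem jacobi_number_decreases {m : ℕ} (hm : 0 < m)
    (A Astar : Matrix (Fin m) (Fin m) ℤ) (lam : Fin m → ℕ) (σ : Equiv.Perm (Fin m))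
    (k : Fin m)
    (hcanon : ∀ i i' : Fin m, A i' (σ i) + (lam i' : ℤ) ≤ A i (σ i) + (lam i : ℤ)) :
    let Λ : ℕ := Finset.univ.sup lam
    let α : Fin m → ℕ := fun i => Λ - lam i
    let β : Fin m → ℤ := fun j =>
      Finset.univ.sup' ⟨⟨0, hm⟩, Finset.mem_univ _⟩ (fun i => A i j - (α i : ℤ))
    (∀ j, Astar k j < (α k : ℤ) + β j) →
    (∀ i, i ≠ k → Astar i = A i) →
    A k (σ k) = (α k : ℤ) + β (σ k) →
    Finset.univ.sup' ⟨1, Finset.mem_univ 1⟩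
        (fun τ : Equiv.Perm (Fin m) => ∑ i, Astar i (τ i)) <
      Finset.univ.sup' ⟨1, Finset.mem_univ 1⟩
        (fun τ : Equiv.Perm (Fin m) => ∑ i, A i (τ i)) := by
  intro Λ α β hstar hrow _
  have hα (i : Fin m) : (α i : ℤ) = Λ - lam i := Nat.cast_sub (le_sup (mem_univ i))
  have hcover (i j : Fin m) : A i j ≤ α i + β j :=
    sub_le_iff_le_add'.1 (le_sup' (fun i => A i j - (α i : ℤ)) (mem_univ i))
  have htransversal (i : Fin m) : α i + β (σ i) ≤ A i (σ i) := by
    refine le_sub_iff_add_le'.1 (sup'_le _ _ fun i' _ => ?_)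
    linarith [hcanon i i', hα i, hα i']
  show Astar.jacobiNumber < A.jacobiNumber
  exact (jacobiNumber_lt_of_row_lt k (fun i hi j => hrow i hi ▸ hcover i j) hstar).trans_le
    (sum_add_le_jacobiNumber σ htransversal)
end

section
/- Let g ∈ R[x_j^{(k)}] and δ the shift derivation. For s ≥ 1, δ^s(g) is linear in its highest-order variables: for each j with ord_{x_j}(g) = a_j ≥ 0, one has δ^s(g) = ∑_j (∂g/∂x_j^{(a_j)}) · x_j^{(a_j+s)} + (terms involving only variables x_j^{(k)} with k < a_j + s), where the coefficients ∂g/∂x_j^{(a_j)} involve only variables of order ≤ a_j. -/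
/-!
The shift `δ` and the partial derivatives obey `[∂/∂x_j^{(k+1)}, δ] = ∂/∂x_j^{(k)}` (checked on
generators). Hence `δ` raises every order bound by one, and if `g` has order `≤ a`, the coefficient
of the top variable `x_j^{(a_j+t)}` in `δ^t g` is still `∂g/∂x_j^{(a_j)}`. For a polynomial `p` of
order `≤ c`, the same relation shows that `δ p - ∑_j ∂p/∂x_j^{(c_j)} · x_j^{(c_j+1)}` has order
`≤ c`; applied to `p = δ^{s-1} g` this is the theorem.
-/

open MvPolynomial

namespace MvPolynomial

theorem pderiv_comm {R σ : Type*} [CommRing R] (i i' : σ) (p : MvPolynomial σ R) :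
    pderiv i (pderiv i' p) = pderiv i' (pderiv i p) := by
  classical
  have h : ⁅(pderiv i : Derivation R (MvPolynomial σ R) _), pderiv i'⁆ = 0 :=
    derivation_ext fun n => by
      rw [Derivation.commutator_apply]
      simp [pderiv_X, Pi.single_apply, apply_ite]
  rw [← sub_eq_zero, ← Derivation.commutator_apply, h, Derivation.zero_apply]

variable {R ι : Type*} [CommRing R]

/-- Polynomials of `x_j`-order `< c j`, in the sense of the theorem: all partial derivatives in
`x_j^{(k)}`, `k ≥ c j`, vanish (in positive characteristic this is weaker than not involving these
variables). -/
def ordLT (c : ι → ℕ) : Subalgebra R (MvPolynomial (ι × ℕ) R) where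
  carrier := {p | ∀ j k, c j ≤ k → pderiv (j, k) p = 0}
  mul_mem' {p q} hp hq j k hk := by simp [Derivation.leibniz, hp j k hk, hq j k hk]
  add_mem' {p q} hp hq j k hk := by simp [hp j k hk, hq j k hk]
  algebraMap_mem' r j k _ := Derivation.map_algebraMap _ r

theorem ordLT_mono {c c' : ι → ℕ} (h : c ≤ c') : ordLT (R := R) c ≤ ordLT c' :=
  fun _ hp j k hk => hp j k ((h j).trans hk)

theorem X_mem_ordLT {c : ι → ℕ} {j : ι} {n : ℕ} (h : n < c j) :
    (X (j, n) : MvPolynomial (ι × ℕ) R) ∈ ordLT c := by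
  intro j' k hk
  refine pderiv_X_of_ne fun hjn => ?_
  obtain ⟨rfl, rfl⟩ := Prod.mk.inj hjn
  omega

theorem pderiv_mem_ordLT {c : ι → ℕ} {p : MvPolynomial (ι × ℕ) R} (hp : p ∈ ordLT c)
    (i : ι × ℕ) : pderiv i p ∈ ordLT c := fun j k hk => by
  rw [pderiv_comm, hp j k hk, map_zero]

theorem pderiv_sum_mul_X_succ [Fintype ι] {c : ι → ℕ} {q : ι → MvPolynomial (ι × ℕ) R}
    (hq : ∀ j, q j ∈ ordLT (c + 1)) (j : ι) :
    pderiv (j, c j + 1) (∑ i, q i * X (i, c i + 1)) = q j := by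
  have hq_top : ∀ i, pderiv (j, c j + 1) (q i) = 0 := fun i => hq i j _ le_rfl
  simp only [map_sum, pderiv_mul, hq_top, zero_mul, zero_add]
  refine (Finset.sum_eq_single j (fun i _ hij => ?_) (by simp)).trans (by simp)
  rw [pderiv_X_of_ne fun h => hij (Prod.mk.inj h).1, mul_zero]

section Shift

variable (δ : Derivation R (MvPolynomial (ι × ℕ) R) (MvPolynomial (ι × ℕ) R))

theorem pderiv_succ_shift (hδ : ∀ j k, δ (X (j, k)) = X (j, k + 1)) (j : ι) (k : ℕ)
    (p : MvPolynomial (ι × ℕ) R) :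
    pderiv (j, k + 1) (δ p) = δ (pderiv (j, k + 1) p) + pderiv (j, k) p := by
  classical
  have h : ⁅(pderiv (j, k + 1) : Derivation R (MvPolynomial (ι × ℕ) R) _), δ⁆ = pderiv (j, k) :=
    derivation_ext fun n => by
      rw [Derivation.commutator_apply]
      rcases n with ⟨j', k'⟩
      by_cases h : j' = j ∧ k' = k
      · obtain ⟨rfl, rfl⟩ := h
        simp [hδ, pderiv_X]
      · simp [hδ, pderiv_X, Pi.single_apply, h, apply_ite δ]
  rw [← sub_eq_iff_eq_add', ← Derivation.commutator_apply, h]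

theorem shift_mem_ordLT (hδ : ∀ j k, δ (X (j, k)) = X (j, k + 1)) {c : ι → ℕ}
    {p : MvPolynomial (ι × ℕ) R} (hp : p ∈ ordLT c) : δ p ∈ ordLT (c + 1) := by
  intro j k (hk : c j + 1 ≤ k)
  obtain ⟨k, rfl⟩ := Nat.exists_eq_add_of_le' (le_of_add_le_right hk)
  rw [pderiv_succ_shift δ hδ, hp j _ (by omega), hp j _ (by omega), map_zero, add_zero]

theorem iterate_shift_mem_ordLT (hδ : ∀ j k, δ (X (j, k)) = X (j, k + 1)) {c : ι → ℕ}
    {p : MvPolynomial (ι × ℕ) R} (hp : p ∈ ordLT c) (s : ℕ) : δ^[s] p ∈ ordLT fun j => c j + s := by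
  induction s with
  | zero => exact hp
  | succ s ih =>
    rw [Function.iterate_succ_apply']
    exact shift_mem_ordLT δ hδ ih

theorem pderiv_iterate_shift_of_mem_ordLT (hδ : ∀ j k, δ (X (j, k)) = X (j, k + 1))
    {c : ι → ℕ} {p : MvPolynomial (ι × ℕ) R} (hp : p ∈ ordLT (c + 1)) (j : ι) (s : ℕ) :
    pderiv (j, c j + s) (δ^[s] p) = pderiv (j, c j) p := by
  induction s with
  | zero => rfl
  | succ s ih =>
    rw [Function.iterate_succ_apply', ← add_assoc, pderiv_succ_shift δ hδ, ih,
      iterate_shift_mem_ordLT δ hδ hp s j _ (by simp; omega), map_zero, zero_add]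

theorem shift_sub_sum_mem_ordLT [Fintype ι] (hδ : ∀ j k, δ (X (j, k)) = X (j, k + 1))
    {c : ι → ℕ} {p : MvPolynomial (ι × ℕ) R} (hp : p ∈ ordLT (c + 1)) :
    δ p - ∑ j, pderiv (j, c j) p * X (j, c j + 1) ∈ ordLT (c + 1) := by
  intro j k (hk : c j + 1 ≤ k)
  obtain ⟨k, rfl⟩ := Nat.exists_eq_add_of_le' (le_of_add_le_right hk)
  rw [map_sub, pderiv_succ_shift δ hδ, hp j _ hk, map_zero, zero_add, sub_eq_zero]
  obtain hck | hck := (Nat.le_of_add_le_add_right hk).eq_or_lt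
  · subst hck
    exact (pderiv_sum_mul_X_succ (fun i => pderiv_mem_ordLT hp (i, c i)) j).symm
  · have hsum : ∑ i, pderiv (i, c i) p * X (i, c i + 1) ∈ ordLT (c + 2) :=
      Subalgebra.sum_mem _ fun i _ => Subalgebra.mul_mem _
        (ordLT_mono (fun _ => by simp) (pderiv_mem_ordLT hp _)) (X_mem_ordLT (by simp))
    rw [hp j k (by simpa using hck), hsum j _ (by simpa using hck)]

end Shift

end MvPolynomial

/-- `δ^s g` is linear in its highest-order variables: if `ord_{x_j}(g) = a j` for each
`j`, then for `s ≥ 1`,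
`δ^s g = ∑ j, (∂g/∂x_j^{(a j)}) * x_j^{(a j + s)} + h`, where `h` involves only variables
`x_j^{(k)}` with `k < a j + s`, and the coefficients `∂g/∂x_j^{(a j)}` involve only
variables of order at most `a j`. -/
theorem iterated_derivative_linear_in_top {R : Type*} [CommRing R] {m : ℕ}
    (δ : Derivation R (MvPolynomial (Fin m × ℕ) R) (MvPolynomial (Fin m × ℕ) R))
    (hδ : ∀ (j : Fin m) (k : ℕ), δ (X (j, k)) = X (j, k + 1))
    (g : MvPolynomial (Fin m × ℕ) R) (a : Fin m → ℕ)
    (horder : ∀ (j : Fin m) (k : ℕ), a j < k → pderiv (j, k) g = 0) :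
    ∀ s : ℕ, 1 ≤ s →
      ∃ h : MvPolynomial (Fin m × ℕ) R,
        (⇑δ)^[s] g = (∑ j, pderiv (j, a j) g * X (j, a j + s)) + h ∧
        (∀ (j : Fin m) (k : ℕ), a j + s ≤ k → pderiv (j, k) h = 0) ∧
        (∀ (j j' : Fin m) (k : ℕ), a j' < k →
          pderiv (j', k) (pderiv (j, a j) g) = 0) := by
  have hg : g ∈ ordLT (a + 1) := horder
  intro s hs
  obtain ⟨t, rfl⟩ := Nat.exists_eq_add_of_le' hs
  refine ⟨_, (add_sub_cancel _ _).symm, ?_, fun j => pderiv_mem_ordLT hg (j, a j)⟩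
  have hδt : δ^[t] g ∈ ordLT ((fun j => a j + t) + 1) :=
    ordLT_mono (fun j => by simp; omega) (iterate_shift_mem_ordLT δ hδ hg t)
  have key := shift_sub_sum_mem_ordLT δ hδ hδt
  simp only [pderiv_iterate_shift_of_mem_ordLT δ hδ hg] at key
  rwa [Function.iterate_succ_apply']
end
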